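/- Let (P,≻,q) be a problem. (i) If k > 1 and β^k(P,≻,q) is stable at (P,≻,q), then GS^k(P,≻,q) is stable at (P,≻,q) and GS^k is not manipulable at (P,≻,q). (ii) If k > ℓ > 1 and GS^ℓ(P,≻,q) is stable at (P,≻,q), then GS^k(P,≻,q) is stable at (P,≻,q) and GS^k is not manipulable at (P,≻,q). -/

import Mathlib

/-!
School choice framework following Bonkoungou–Nesterov,
"Reforms meet fairness concerns in school and college admissions".

Students `I` and schools `S` are finite types with `|I| > |S|`.
A strict preference relation of a student over `S ∪ {∅}` is represented by a list
of `Option S` containing every element exactly once (earlier = more preferred);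
`none` is the outside option.  A strict priority order of a school is a list of
`I` containing every student exactly once (earlier = higher priority).
-/

namespace SchoolChoice

variable {I S : Type*} [Fintype I] [DecidableEq I] [Fintype S] [DecidableEq S]

/-- `p` is a strict preference relation on `S ∪ {∅}`: a ranking list containing every
element of `Option S` exactly once. -/
def ValidPref (p : List (Option S)) : Prop := p.Nodup ∧ ∀ x : Option S, x ∈ p

/-- `pr` is a strict priority order: a ranking list containing every student exactly once. -/
def ValidPrio (pr : List I) : Prop := pr.Nodup ∧ ∀ i : I, i ∈ pr

/-- `a` is strictly preferred to `b` under the preference relation `p`. -/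
def prefLt (p : List (Option S)) (a b : Option S) : Prop := p.idxOf a < p.idxOf b

/-- `i` has strictly higher priority than `j` under the priority order `pr`. -/
def prioLt (pr : List I) (i j : I) : Prop := pr.idxOf i < pr.idxOf j

instance (p : List (Option S)) (a b : Option S) : Decidable (prefLt p a b) :=
  inferInstanceAs (Decidable (_ < _))

instance (pr : List I) (i j : I) : Decidable (prioLt pr i j) :=
  inferInstanceAs (Decidable (_ < _))

/-- The acceptable schools of `p` (those preferred to the outside option), in preference
order. -/
def acceptables (p : List (Option S)) : List S := (p.takeWhile Option.isSome).filterMap id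

/-- The truncation of `p` after its `k`-th acceptable school: the preference relation
listing, in the same order, only the `min k _` most-preferred acceptable schools of `p`,
all other schools being unacceptable (kept below `none` in their original order). -/
def truncate (p : List (Option S)) (k : ℕ) : List (Option S) :=
  ((acceptables p).take k).map some ++
    none :: p.filter (fun x => decide (x ≠ none ∧ x ∉ ((acceptables p).take k).map some))

/-- `μ` is a matching: it respects the capacities `q`. -/
def IsMatching (q : S → ℕ) (μ : I → Option S) : Prop :=
  ∀ s : S, (Finset.univ.filter (fun i => μ i = some s)).card ≤ q s

/-- The pair `(i, s)` blocks `μ` under the problem `(P, prio, q)`. -/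
def Blocks (P : I → List (Option S)) (prio : S → List I) (q : S → ℕ)
    (μ : I → Option S) (i : I) (s : S) : Prop :=
  prefLt (P i) (some s) (μ i) ∧
    ((Finset.univ.filter (fun j => μ j = some s)).card < q s ∨
      ∃ j : I, μ j = some s ∧ prioLt (prio s) i j)

/-- `i` is a blocking student for `μ` under `(P, prio, q)`. -/
def BlockingStudent (P : I → List (Option S)) (prio : S → List I) (q : S → ℕ)
    (μ : I → Option S) (i : I) : Prop :=
  ∃ s : S, Blocks P prio q μ i s

/-- `μ` is individually rational under `P`. -/
def IndividuallyRational (P : I → List (Option S)) (μ : I → Option S) : Prop :=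
  ∀ i : I, ¬ prefLt (P i) none (μ i)

/-- `μ` is stable at `(P, prio, q)`. -/
def IsStable (P : I → List (Option S)) (prio : S → List I) (q : S → ℕ)
    (μ : I → Option S) : Prop :=
  IndividuallyRational P μ ∧ ∀ i : I, ¬ BlockingStudent P prio q μ i

/-- The number of blocking students for `μ` under `(P, prio, q)`. -/
noncomputable def numBlocking (P : I → List (Option S)) (prio : S → List I) (q : S → ℕ)
    (μ : I → Option S) : ℕ :=
  {i : I | BlockingStudent P prio q μ i}.ncard

/-! ### The Gale–Shapley student-proposing deferred acceptance mechanism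

The state `σ : I → ℕ` records, for each student, how many of her acceptable schools
have already rejected her; she currently applies to the `σ i`-th school on her list
(if any).  At each round every school tentatively keeps the `q s` highest-priority
students among its current applicants and rejects the rest, who move on. -/

/-- The school student `i` currently applies to. -/
def daTarget (P : I → List (Option S)) (σ : I → ℕ) (i : I) : Option S :=
  (acceptables (P i))[σ i]?

/-- The students tentatively held by school `s`: the `q s` highest-priority current
applicants. -/
def daHeld (P : I → List (Option S)) (prio : S → List I) (q : S → ℕ)
    (σ : I → ℕ) (s : S) : List I :=
  ((prio s).filter (fun i => decide (daTarget P σ i = some s))).take (q s)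

/-- One round of deferred acceptance: every rejected student moves to her next choice. -/
def daStep (P : I → List (Option S)) (prio : S → List I) (q : S → ℕ)
    (σ : I → ℕ) : I → ℕ := fun i =>
  match daTarget P σ i with
  | none => σ i
  | some s => if i ∈ daHeld P prio q σ s then σ i else σ i + 1

/-- The Gale–Shapley (student-proposing deferred acceptance) mechanism.  Iterating the
round map `|I| * |S| + 1` times is guaranteed to reach the terminal state. -/
def GS (P : I → List (Option S)) (prio : S → List I) (q : S → ℕ) : I → Option S :=
  fun i =>
    let σ := (daStep P prio q)^[Fintype.card I * Fintype.card S + 1] (fun _ => 0)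
    match daTarget P σ i with
    | none => none
    | some s => if i ∈ daHeld P prio q σ s then some s else none

/-- The constrained Gale–Shapley mechanism `GS^k`. -/
def GSk (k : ℕ) (P : I → List (Option S)) (prio : S → List I) (q : S → ℕ) : I → Option S :=
  GS (fun i => truncate (P i) k) prio q

/-! ### The Boston (immediate acceptance) mechanism -/

/-- Round `t` of the Boston mechanism: each not-yet-accepted student applies to her
`t`-th ranked acceptable school (0-indexed), and each school permanently accepts, up to
its remaining capacity, its highest-priority new applicants. -/
def bostonRound (P : I → List (Option S)) (prio : S → List I) (q : S → ℕ)
    (μ : I → Option S) (t : ℕ) : I → Option S := fun i =>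
  match μ i with
  | some s => some s
  | none =>
    match (acceptables (P i))[t]? with
    | none => none
    | some s =>
      if i ∈ ((prio s).filter
            (fun j => decide (μ j = none ∧ (acceptables (P j))[t]? = some s))).take
          (q s - (Finset.univ.filter (fun j => μ j = some s)).card)
      then some s else none

/-- The Boston (immediate acceptance) mechanism. -/
def Boston (P : I → List (Option S)) (prio : S → List I) (q : S → ℕ) : I → Option S :=
  (List.range (Fintype.card S)).foldl (bostonRound P prio q) (fun _ => none)

/-- The constrained Boston mechanism `β^k`. -/
def Bostonk (k : ℕ) (P : I → List (Option S)) (prio : S → List I) (q : S → ℕ) :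
    I → Option S :=
  Boston (fun i => truncate (P i) k) prio q

/-! ### The first-preference-first mechanism -/

/-- The adjusted priority profile: each first-preference-first school (member of `fpf`)
ranks students first by the rank they assign to it under `P` (counting the ranking of the
outside option as well), ties broken by the original priority; equal-preference schools
keep their original priority. -/
def fpfPrio (fpf : Finset S) (P : I → List (Option S)) (prio : S → List I) : S → List I :=
  fun s =>
    if s ∈ fpf then
      (List.range (Fintype.card S + 1)).flatMap
        (fun r => (prio s).filter (fun i => decide ((P i).idxOf (some s) = r)))
    else prio s

/-- The first-preference-first mechanism with set `fpf` of first-preference-first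
schools: Gale–Shapley run on the adjusted priorities. -/
def FPF (fpf : Finset S) (P : I → List (Option S)) (prio : S → List I) (q : S → ℕ) :
    I → Option S :=
  GS P (fpfPrio fpf P prio) q

/-- The constrained first-preference-first mechanism `FPF^k`. -/
def FPFk (fpf : Finset S) (k : ℕ) (P : I → List (Option S)) (prio : S → List I)
    (q : S → ℕ) : I → Option S :=
  FPF fpf (fun i => truncate (P i) k) prio q

/-! ### Manipulation and equilibrium notions -/

/-- Student `i` is a manipulating student of the mechanism `φ` (with priorities and
capacities fixed) at the true profile `P`. -/
def ManipulatingStudent (φ : (I → List (Option S)) → I → Option S)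
    (P : I → List (Option S)) (i : I) : Prop :=
  ∃ Q : List (Option S), ValidPref Q ∧
    prefLt (P i) (φ (Function.update P i Q) i) (φ P i)

/-- The mechanism `φ` is not manipulable at `P`. -/
def NotManipulable (φ : (I → List (Option S)) → I → Option S)
    (P : I → List (Option S)) : Prop :=
  ∀ i : I, ¬ ManipulatingStudent φ P i

/-- `P'` is a Nash equilibrium of the game `(φ, P)` in which the sophisticated students
are the members of `M` (who may misreport, and best respond) and all other (sincere)
students report truthfully. -/
def NashEq (φ : (I → List (Option S)) → I → Option S) (P : I → List (Option S))
    (M : Finset I) (P' : I → List (Option S)) : Prop :=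
  (∀ i, ValidPref (P' i)) ∧ (∀ i ∉ M, P' i = P i) ∧
    ∀ i ∈ M, ∀ Q : List (Option S), ValidPref Q →
      ¬ prefLt (P i) (φ (Function.update P' i Q) i) (φ P' i)

/-! ### Semi-sophisticated students -/

/-- Student `i` is guaranteed her first choice `s`: `s` is her most-preferred acceptable
school and `i` is among the `q s` highest-priority students at `s`. -/
def GuaranteedFirstChoice (P : I → List (Option S)) (prio : S → List I) (q : S → ℕ)
    (i : I) (s : S) : Prop :=
  (acceptables (P i)).head? = some s ∧ (prio s).idxOf i < q s

instance (P : I → List (Option S)) (prio : S → List I) (q : S → ℕ) (i : I) (s : S) :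
    Decidable (GuaranteedFirstChoice P prio q i s) :=
  inferInstanceAs (Decidable (_ ∧ _))

/-- School `s` is competitive: at least `q s` students are guaranteed their first
choice `s`. -/
def Competitive (P : I → List (Option S)) (prio : S → List I) (q : S → ℕ) (s : S) : Prop :=
  q s ≤ (Finset.univ.filter (fun i => GuaranteedFirstChoice P prio q i s)).card

instance (P : I → List (Option S)) (prio : S → List I) (q : S → ℕ) (s : S) :
    Decidable (Competitive P prio q s) :=
  inferInstanceAs (Decidable (_ ≤ _))

/-- `P'` is a Nash equilibrium of the game `(GS^ℓ, P)` with semi-sophisticated students: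
every student guaranteed her first choice reports truthfully; every other student reports
truthfully if she has at most `ℓ` acceptable schools or all her acceptable schools are
competitive, and otherwise lists as acceptable, in the order given by her true preference,
only her acceptable schools that are not competitive. -/
def SemiSophProfile (ℓ : ℕ) (P : I → List (Option S)) (prio : S → List I) (q : S → ℕ)
    (P' : I → List (Option S)) : Prop :=
  ∀ i : I,
    ((∃ s : S, GuaranteedFirstChoice P prio q i s) → P' i = P i) ∧
    (¬ (∃ s : S, GuaranteedFirstChoice P prio q i s) →
      (((acceptables (P i)).length ≤ ℓ ∨ ∀ s ∈ acceptables (P i), Competitive P prio q s) →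
          P' i = P i) ∧
      (¬ ((acceptables (P i)).length ≤ ℓ ∨
            ∀ s ∈ acceptables (P i), Competitive P prio q s) →
          acceptables (P' i) =
            (acceptables (P i)).filter (fun s => decide (¬ Competitive P prio q s))))

end SchoolChoice

/-!
Everything reduces to one fact: if `GS^k(P)` is stable at `P`, then `GS^k` is not manipulable at
`P`. Deferred acceptance on ranking lists yields the student-optimal stable matching, and all
stable matchings leave the same students unmatched (rural hospitals). Hence lengthening the lists
does not change an outcome that is already stable for the longer lists. This gives
`GS^k = GS^ℓ` in (ii), and shows that `GS^k(P)` is also the outcome when a would-be manipulator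
reports her full list. From there a weak form of strategy-proofness applies: a student who is
seated at `s` in some matching that is stable when she ranks `s` alone gets at least `s` from
deferred acceptance. In (i), a stable Boston outcome is the deferred acceptance outcome, by a
minimal-counterexample argument on the rank of the school at stake.
-/

namespace SchoolChoice

variable {I S : Type*}

section Rank

variable {α : Type*} [DecidableEq α]

/-- `none`, like any unlisted element, gets the length of the list. -/
def rank (L : List α) : Option α → ℕ
  | none => L.length
  | some a => L.idxOf a

@[simp] lemma rank_none (L : List α) : rank L none = L.length := rfl

@[simp] lemma rank_some (L : List α) (a : α) : rank L (some a) = L.idxOf a := rfl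

lemma rank_le_length (L : List α) (o : Option α) : rank L o ≤ L.length := by
  cases o <;> simp [List.idxOf_le_length]

lemma mem_of_idxOf_lt_rank {L : List α} {a : α} {o : Option α} (h : L.idxOf a < rank L o) :
    a ∈ L :=
  List.idxOf_lt_length_iff.mp (h.trans_le (rank_le_length L o))

lemma rank_getElem? {L : List α} (hL : L.Nodup) {n : ℕ} (hn : n ≤ L.length) :
    rank L L[n]? = n := by
  rcases hn.lt_or_eq with hn | rfl
  · simp [List.getElem?_eq_getElem hn, hL.idxOf_getElem]
  · simp

lemma eq_of_rank_eq {L : List α} {o o' : Option α} (ho : ∀ a ∈ o, a ∈ L)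
    (ho' : ∀ a ∈ o', a ∈ L) (h : rank L o = rank L o') : o = o' := by
  cases o with
  | none =>
    cases o' with
    | none => rfl
    | some a => exact absurd h (List.idxOf_lt_length_iff.mpr (ho' a rfl)).ne'
  | some a =>
    cases o' with
    | none => exact absurd h (List.idxOf_lt_length_iff.mpr (ho a rfl)).ne
    | some b => exact congrArg some ((List.idxOf_inj (ho a rfl)).mp h)

lemma rank_of_isPrefix {L' L : List α} (h : L' <+: L) (o : Option α) :
    rank L' o = min (rank L o) L'.length := by
  cases o with
  | none => simp [h.length_le]
  | some a =>
    by_cases ha : a ∈ L'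
    · have := List.idxOf_lt_length_iff.mpr ha
      simp only [rank_some, ← h.idxOf_eq_of_mem ha]
      omega
    · have := h.idxOf_le a
      simp only [rank_some, List.idxOf_of_notMem ha] at this ⊢
      omega

lemma idxOf_lt_rank_iff_of_isPrefix {L' L : List α} (h : L' <+: L) {a : α} {o : Option α} :
    L'.idxOf a < rank L' o ↔ L.idxOf a < rank L o ∧ L.idxOf a < L'.length := by
  have ha := rank_of_isPrefix h (some a)
  rw [rank_some, rank_some] at ha
  rw [ha, rank_of_isPrefix h o]
  omega

lemma idxOf_lt_length_iff_of_isPrefix {L' L : List α} (h : L' <+: L) {a : α} :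
    L.idxOf a < L'.length ↔ a ∈ L' := by
  have := rank_of_isPrefix h (some a)
  rw [rank_some, rank_some] at this
  rw [← List.idxOf_lt_length_iff, this]
  omega

end Rank

lemma rel_of_mem_take_of_card_le {α : Type*} [DecidableEq α] {r : α → α → Prop}
    [IsTrans α r] {F : List α} (hF : F.Pairwise r) {n : ℕ} {b : α} (W : Finset α)
    (hWn : n ≤ W.card) (hWF : ∀ w ∈ W, w ∈ F) (hWb : ∀ w ∈ W, r w b) :
    ∀ a ∈ F.take n, r a b := by
  intro a ha
  by_contra hab
  have hWtake : W ⊆ (F.take n).toFinset := by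
    intro w hw
    rw [List.mem_toFinset]
    by_contra hwt
    have hwd : w ∈ F.drop n := by
      have := hWF w hw
      rw [← List.take_append_drop n F, List.mem_append] at this
      exact this.resolve_left hwt
    exact hab (_root_.trans (hF.rel_of_mem_take_of_mem_drop ha hwd) (hWb w hw))
  have haW : a ∉ W := fun haW => hab (hWb a haW)
  have := Finset.card_le_card (Finset.insert_subset (List.mem_toFinset.mpr ha) hWtake)
  rw [Finset.card_insert_of_notMem haW] at this
  have := (F.take n).toFinset_card_le
  have := List.length_take_le n F
  omega

lemma isFixedPt_iterate_of_potential {α : Type*} {f : α → α} (Φ : α → ℕ) {M : ℕ}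
    (hΦ : ∀ x, f x ≠ x → Φ x < Φ (f x)) {x : α} (hM : ∀ n, Φ (f^[n] x) ≤ M) :
    Function.IsFixedPt f (f^[M + 1] x) := by
  by_contra hfix
  have hmove : ∀ n ≤ M, f (f^[n] x) ≠ f^[n] x := by
    intro n hn hn'
    apply hfix
    rw [show M + 1 = (M + 1 - n) + n by omega, Function.iterate_add_apply,
      Function.iterate_fixed hn']
    exact hn'
  have hgrow : ∀ n ≤ M + 1, n ≤ Φ (f^[n] x) := by
    intro n
    induction n with
    | zero => intro _; omega
    | succ n ih =>
      intro hn
      have := hΦ _ (hmove n (by omega))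
      rw [Function.iterate_succ_apply']
      have := ih (by omega)
      omega
  have := hgrow (M + 1) le_rfl
  have := hM (M + 1)
  omega

section Priority

variable [DecidableEq I]

lemma ValidPrio.pairwise {pr : List I} (h : ValidPrio pr) : pr.Pairwise (prioLt pr) := by
  rw [List.pairwise_iff_getElem]
  intro a b ha hb hab
  simp only [prioLt, h.1.idxOf_getElem]
  exact hab

lemma ValidPrio.prioLt_of_not_prioLt {pr : List I} (h : ValidPrio pr) {i j : I} (hij : i ≠ j)
    (hn : ¬ prioLt pr i j) : prioLt pr j i := by
  have := (List.idxOf_inj (h.2 i)).not.mpr hij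
  unfold prioLt at *
  omega

instance (pr : List I) : IsTrans I (prioLt pr) :=
  ⟨fun _ _ _ => Nat.lt_trans⟩

end Priority

section Stability

variable [Fintype I] [DecidableEq I] [DecidableEq S]

def ClaimsSeat (prio : S → List I) (q : S → ℕ) (μ : I → Option S) (i : I) (s : S) : Prop :=
  (Finset.univ.filter (fun j => μ j = some s)).card < q s ∨
    ∃ j : I, μ j = some s ∧ prioLt (prio s) i j

/-- Stability when student `i` finds exactly the schools of `A i` acceptable, ranked in that
order. -/
structure StableFor (A : I → List S) (prio : S → List I) (q : S → ℕ) (μ : I → Option S) :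
    Prop where
  mem : ∀ i, ∀ s ∈ μ i, s ∈ A i
  isMatching : IsMatching q μ
  not_claimsSeat : ∀ i s, (A i).idxOf s < rank (A i) (μ i) → ¬ ClaimsSeat prio q μ i s

end Stability

namespace DA

variable [DecidableEq S]

section

variable (A : I → List S) (prio : S → List I) (q : S → ℕ)

/-- The school `i` applies to when she has been rejected by her first `σ i` schools. -/
def target (σ : I → ℕ) (i : I) : Option S := (A i)[σ i]?

def applicants (σ : I → ℕ) (s : S) : List I :=
  (prio s).filter (fun i => decide (target A σ i = some s))

def held (σ : I → ℕ) (s : S) : List I := (applicants A prio σ s).take (q s)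

variable [DecidableEq I]

def step (σ : I → ℕ) : I → ℕ := fun i =>
  match target A σ i with
  | none => σ i
  | some s => if i ∈ held A prio q σ s then σ i else σ i + 1

def state (t : ℕ) : I → ℕ := (step A prio q)^[t] (fun _ => 0)

def Saturated (σ : I → ℕ) (i : I) (s : S) : Prop :=
  q s ≤ (held A prio q σ s).length ∧ ∀ j ∈ held A prio q σ s, prioLt (prio s) j i

variable [Fintype I] [Fintype S]

def final : I → ℕ := state A prio q (Fintype.card I * Fintype.card S + 1)

/-- `GS P prio q` is `outcome (fun i => acceptables (P i)) prio q` by definition. -/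
def outcome : I → Option S := fun i =>
  match target A (final A prio q) i with
  | none => none
  | some s => if i ∈ held A prio q (final A prio q) s then some s else none

end

variable {A : I → List S} {prio : S → List I} {q : S → ℕ}

lemma mem_applicants (hprio : ∀ s, ValidPrio (prio s)) {σ : I → ℕ} {s : S} {j : I} :
    j ∈ applicants A prio σ s ↔ target A σ j = some s := by
  simp [applicants, (hprio s).2 j]

lemma target_of_mem_held {σ : I → ℕ} {s : S} {j : I} (h : j ∈ held A prio q σ s) :
    target A σ j = some s := by
  have := (List.take_sublist _ _).subset h
  simpa [applicants] using (List.mem_filter.mp this).2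

lemma held_nodup (hprio : ∀ s, ValidPrio (prio s)) (σ : I → ℕ) (s : S) :
    (held A prio q σ s).Nodup :=
  ((hprio s).1.filter _).sublist (List.take_sublist _ _)

lemma idxOf_of_target_eq_some {σ : I → ℕ} {j : I} {s : S} (hA : (A j).Nodup)
    (ht : target A σ j = some s) : (A j).idxOf s = σ j := by
  obtain ⟨hlt, rfl⟩ := List.getElem?_eq_some_iff.mp ht
  exact hA.idxOf_getElem _ _

variable [DecidableEq I]

lemma step_eq_or (σ : I → ℕ) (i : I) :
    step A prio q σ i = σ i ∨
      step A prio q σ i = σ i + 1 ∧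
        ∃ s, target A σ i = some s ∧ i ∉ held A prio q σ s := by
  unfold step
  cases ht : target A σ i with
  | none => simp
  | some s => by_cases hh : i ∈ held A prio q σ s <;> simp [hh]

lemma le_step (σ : I → ℕ) (i : I) : σ i ≤ step A prio q σ i := by
  rcases step_eq_or (A := A) (prio := prio) (q := q) σ i with h | ⟨h, -⟩ <;> omega

lemma step_eq_of_mem_held {σ : I → ℕ} {s : S} {j : I} (h : j ∈ held A prio q σ s) :
    step A prio q σ j = σ j := by
  simp [step, target_of_mem_held h, h]

lemma state_succ (t : ℕ) : state A prio q (t + 1) = step A prio q (state A prio q t) :=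
  Function.iterate_succ_apply' _ _ _

lemma state_le_length (t : ℕ) (i : I) : state A prio q t i ≤ (A i).length := by
  induction t generalizing i with
  | zero => simp [state]
  | succ t ih =>
    rw [state_succ]
    rcases step_eq_or (A := A) (prio := prio) (q := q) (state A prio q t) i
      with h | ⟨h, s, ht, -⟩
    · rw [h]; exact ih i
    · rw [h]
      exact (List.getElem?_eq_some_iff.mp ht).1

lemma saturated_of_not_mem_held (hprio : ∀ s, ValidPrio (prio s)) {σ : I → ℕ} {i : I} {s : S}
    (ht : target A σ i = some s) (hi : i ∉ held A prio q σ s) : Saturated A prio q σ i s := by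
  have hdrop : i ∈ (applicants A prio σ s).drop (q s) := by
    have := (mem_applicants hprio).mpr ht
    rw [← List.take_append_drop (q s) (applicants A prio σ s), List.mem_append] at this
    exact this.resolve_left hi
  refine ⟨?_, fun j hj => ?_⟩
  · have := List.length_pos_of_mem hdrop
    simp only [held, List.length_take, List.length_drop] at this ⊢
    omega
  · exact (((hprio s).pairwise.filter _).rel_of_mem_take_of_mem_drop hj hdrop)

/-- Students held at `s` keep applying to `s`, so the next class at `s` is chosen from a pool
containing the current full class. -/
lemma Saturated.step (hprio : ∀ s, ValidPrio (prio s)) {σ : I → ℕ} {i : I} {s : S}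
    (h : Saturated A prio q σ i s) : Saturated A prio q (DA.step A prio q σ) i s := by
  have hsub : ∀ j ∈ held A prio q σ s, j ∈ applicants A prio (DA.step A prio q σ) s := by
    intro j hj
    rw [mem_applicants hprio, target, step_eq_of_mem_held hj]
    exact target_of_mem_held hj
  have hcard : q s ≤ (applicants A prio (DA.step A prio q σ) s).length :=
    h.1.trans (List.subperm_of_subset (held_nodup hprio σ s) hsub).length_le
  refine ⟨by simp [held, hcard], ?_⟩
  exact rel_of_mem_take_of_card_le ((hprio s).pairwise.filter _) (held A prio q σ s).toFinset
    (by rw [List.toFinset_card_of_nodup (held_nodup hprio σ s)]; exact h.1)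
    (fun j hj => hsub j (List.mem_toFinset.mp hj)) (fun j hj => h.2 j (List.mem_toFinset.mp hj))

lemma saturated_state (hprio : ∀ s, ValidPrio (prio s)) {t : ℕ} {i : I} {s : S}
    (h : (A i).idxOf s < state A prio q t i) : Saturated A prio q (state A prio q t) i s := by
  induction t with
  | zero => simp [state] at h
  | succ t ih =>
    rw [state_succ] at h ⊢
    by_cases hlt : (A i).idxOf s < state A prio q t i
    · exact (ih hlt).step hprio
    · rcases step_eq_or (A := A) (prio := prio) (q := q) (state A prio q t) i
        with heq | ⟨heq, u, ht, hu⟩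
      · omega
      · have hidx : (A i).idxOf s = state A prio q t i := by omega
        have hs : s ∈ A i :=
          List.idxOf_lt_length_iff.mp (hidx ▸ (List.getElem?_eq_some_iff.mp ht).1)
        obtain rfl : u = s := Option.some_injective _ <| ht.symm.trans <| by
          rw [target, ← hidx]; exact List.getElem?_idxOf hs
        exact (saturated_of_not_mem_held hprio ht hu).step hprio

variable [Fintype I]

/-- No student is ever rejected by a school that seats her in the stable matching `ν`: at the
first such rejection, of `i` by `s`, some student held at `s` is not seated there by `ν`; she
prefers `s` to her school under `ν` and outranks `i`, so she blocks `ν`. -/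
theorem state_le_rank (hA : ∀ i, (A i).Nodup) (hprio : ∀ s, ValidPrio (prio s))
    {ν : I → Option S} (hν : StableFor A prio q ν) (t : ℕ) (i : I) :
    state A prio q t i ≤ rank (A i) (ν i) := by
  induction t generalizing i with
  | zero => simp [state]
  | succ t ih =>
    rw [state_succ]
    rcases step_eq_or (A := A) (prio := prio) (q := q) (state A prio q t) i
      with heq | ⟨heq, s, ht, hi⟩
    · exact heq ▸ ih i
    rw [heq, Nat.add_one_le_iff]
    refine (ih i).lt_of_ne fun hrank => ?_
    have hνi : ν i = some s := by
      refine eq_of_rank_eq (hν.mem i) (by simpa using List.mem_of_getElem? ht) ?_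
      rw [← hrank, rank_some, idxOf_of_target_eq_some (hA i) ht]
    obtain ⟨hfull, hhigher⟩ := saturated_of_not_mem_held hprio ht hi
    obtain ⟨j, hj, hjν⟩ : ∃ j ∈ held A prio q (state A prio q t) s, ν j ≠ some s := by
      by_contra! hall
      have hsub : insert i (held A prio q (state A prio q t) s).toFinset ⊆
          Finset.univ.filter (fun j => ν j = some s) := by
        intro j hj
        rcases Finset.mem_insert.mp hj with rfl | hj
        · simpa using hνi
        · simpa using hall j (List.mem_toFinset.mp hj)
      have := Finset.card_le_card hsub
      rw [Finset.card_insert_of_notMem (by simpa using hi),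
        List.toFinset_card_of_nodup (held_nodup hprio _ _)] at this
      have := hν.isMatching s
      omega
    have hjs : (A j).idxOf s < rank (A j) (ν j) := by
      refine lt_of_le_of_ne ?_ fun h => hjν (eq_of_rank_eq (hν.mem j) ?_ h.symm)
      · rw [idxOf_of_target_eq_some (hA j) (target_of_mem_held hj)]
        exact ih j
      · simpa using List.mem_of_getElem? (target_of_mem_held hj)
    exact hν.not_claimsSeat j s hjs (Or.inr ⟨i, hνi, hhigher j hj⟩)

variable [Fintype S]

/-- Each round moves some student down her list unless it changes nothing, and no student
moves past the end of her list, so `|I| * |S| + 1` rounds reach the terminal state. -/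
lemma step_final (hA : ∀ i, (A i).Nodup) :
    step A prio q (final A prio q) = final A prio q := by
  refine isFixedPt_iterate_of_potential (fun σ => ∑ i, σ i) (fun σ hσ => ?_) (fun t => ?_)
  · obtain ⟨i, hi⟩ := Function.ne_iff.mp hσ
    exact Finset.sum_lt_sum (fun j _ => le_step σ j)
      ⟨i, Finset.mem_univ i, (le_step σ i).lt_of_ne' hi⟩
  · calc ∑ i, (step A prio q)^[t] (fun _ => 0) i ≤ ∑ _i : I, Fintype.card S :=
          Finset.sum_le_sum fun i _ => (state_le_length t i).trans (hA i).length_le_card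
      _ = Fintype.card I * Fintype.card S := by simp

lemma mem_held_final (hA : ∀ i, (A i).Nodup) {i : I} {s : S}
    (ht : target A (final A prio q) i = some s) : i ∈ held A prio q (final A prio q) s := by
  by_contra hi
  have := congrFun (step_final (prio := prio) (q := q) hA) i
  simp [step, ht, hi] at this

lemma outcome_eq_target (hA : ∀ i, (A i).Nodup) (i : I) :
    outcome A prio q i = target A (final A prio q) i := by
  unfold outcome
  cases ht : target A (final A prio q) i with
  | none => rfl
  | some s => simp [mem_held_final hA ht]

lemma rank_outcome (hA : ∀ i, (A i).Nodup) (i : I) :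
    rank (A i) (outcome A prio q i) = final A prio q i := by
  rw [outcome_eq_target hA]
  exact rank_getElem? (hA i) (state_le_length _ i)

lemma fiber_outcome (hA : ∀ i, (A i).Nodup) (s : S) :
    Finset.univ.filter (fun j => outcome A prio q j = some s) =
      (held A prio q (final A prio q) s).toFinset := by
  ext j
  simp only [Finset.mem_filter, Finset.mem_univ, true_and, List.mem_toFinset,
    outcome_eq_target hA]
  exact ⟨mem_held_final hA, target_of_mem_held⟩

lemma card_fiber_outcome (hA : ∀ i, (A i).Nodup) (hprio : ∀ s, ValidPrio (prio s)) (s : S) :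
    (Finset.univ.filter (fun j => outcome A prio q j = some s)).card =
      (held A prio q (final A prio q) s).length := by
  rw [fiber_outcome hA, List.toFinset_card_of_nodup (held_nodup hprio _ _)]

lemma isMatching_outcome (hA : ∀ i, (A i).Nodup) (hprio : ∀ s, ValidPrio (prio s)) :
    IsMatching q (outcome A prio q) := fun s => by
  rw [card_fiber_outcome hA hprio]
  exact List.length_take_le _ _

theorem stableFor_outcome (hA : ∀ i, (A i).Nodup) (hprio : ∀ s, ValidPrio (prio s)) :
    StableFor A prio q (outcome A prio q) where
  mem i s hs := by
    rw [Option.mem_def, outcome_eq_target hA] at hs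
    exact List.mem_of_getElem? hs
  isMatching := isMatching_outcome hA hprio
  not_claimsSeat i s hs hclaim := by
    rw [rank_outcome hA] at hs
    obtain ⟨hfull, hhigher⟩ : Saturated A prio q (final A prio q) i s :=
      saturated_state hprio hs
    rcases hclaim with hvac | ⟨j, hj, hij⟩
    · rw [card_fiber_outcome hA hprio] at hvac
      omega
    · rw [outcome_eq_target hA] at hj
      have hji := hhigher j (mem_held_final hA hj)
      exact absurd (hij.trans hji) (lt_irrefl _)

theorem rank_outcome_le (hA : ∀ i, (A i).Nodup) (hprio : ∀ s, ValidPrio (prio s))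
    {ν : I → Option S} (hν : StableFor A prio q ν) (i : I) :
    rank (A i) (outcome A prio q i) ≤ rank (A i) (ν i) := by
  rw [rank_outcome hA]
  exact state_le_rank hA hprio hν _ i

lemma eq_none_of_outcome_eq_none (hA : ∀ i, (A i).Nodup) (hprio : ∀ s, ValidPrio (prio s))
    {ν : I → Option S} (hν : StableFor A prio q ν) {i : I} (h : outcome A prio q i = none) :
    ν i = none := by
  have := rank_outcome_le hA hprio hν i
  rw [h, rank_none] at this
  exact eq_of_rank_eq (hν.mem i) (by simp) (le_antisymm (rank_le_length _ _) this)

lemma card_fiber_outcome_le (hA : ∀ i, (A i).Nodup) (hprio : ∀ s, ValidPrio (prio s))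
    {ν : I → Option S} (hν : StableFor A prio q ν) (o : Option S) :
    (Finset.univ.filter (fun j => outcome A prio q j = o)).card ≤
      (Finset.univ.filter (fun j => ν j = o)).card := by
  cases o with
  | none =>
    exact Finset.card_le_card fun j hj => by
      simpa using eq_none_of_outcome_eq_none hA hprio hν (Finset.mem_filter.mp hj).2
  | some s =>
    by_contra! hlt
    obtain ⟨j, hj, hjν⟩ := Finset.exists_mem_notMem_of_card_lt_card hlt
    simp only [Finset.mem_filter, Finset.mem_univ, true_and] at hj hjν
    have hsj : s ∈ A j := (stableFor_outcome hA hprio).mem j s hj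
    have hjs : (A j).idxOf s < rank (A j) (ν j) := by
      refine lt_of_le_of_ne ?_ fun h => hjν (eq_of_rank_eq (hν.mem j) (by simpa) h.symm)
      simpa [hj] using rank_outcome_le hA hprio hν j
    exact hν.not_claimsSeat j s hjs (Or.inl (hlt.trans_le (isMatching_outcome hA hprio s)))

/-- The rural hospitals theorem. -/
theorem outcome_eq_none_iff (hA : ∀ i, (A i).Nodup) (hprio : ∀ s, ValidPrio (prio s))
    {ν : I → Option S} (hν : StableFor A prio q ν) {i : I} :
    outcome A prio q i = none ↔ ν i = none := by
  refine ⟨eq_none_of_outcome_eq_none hA hprio hν, fun hi => ?_⟩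
  have hsum : ∀ μ : I → Option S, Fintype.card I =
      ∑ o : Option S, (Finset.univ.filter (fun j => μ j = o)).card := fun μ =>
    Finset.card_eq_sum_card_fiberwise fun _ _ => Finset.mem_univ _
  have hnone := (Finset.sum_eq_sum_iff_of_le fun o _ => card_fiber_outcome_le hA hprio hν o).mp
    ((hsum _).symm.trans (hsum ν)) none (Finset.mem_univ _)
  have heq := Finset.eq_of_subset_of_card_le (fun j hj => by
      simpa using eq_none_of_outcome_eq_none hA hprio hν (Finset.mem_filter.mp hj).2)
    hnone.ge
  have hi' : i ∈ Finset.univ.filter (fun j => ν j = none) := by simpa using hi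
  simpa [← heq] using hi'

end DA

section Truncation

variable [DecidableEq S] [Fintype I] [DecidableEq I] {A A' : I → List S} {prio : S → List I}
  {q : S → ℕ} {μ : I → Option S}

lemma StableFor.of_isPrefix (h : StableFor A prio q μ) (hpre : ∀ i, A' i <+: A i)
    (hμ : ∀ i, ∀ s ∈ μ i, s ∈ A' i) : StableFor A' prio q μ where
  mem := hμ
  isMatching := h.isMatching
  not_claimsSeat i s hs :=
    h.not_claimsSeat i s ((idxOf_lt_rank_iff_of_isPrefix (hpre i)).mp hs).1

lemma StableFor.of_isPrefix_of_eq_none (h : StableFor A' prio q μ) (hpre : ∀ i, A' i <+: A i)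
    (hnone : ∀ i, μ i = none → A' i = A i) : StableFor A prio q μ where
  mem i s hs := (hpre i).subset (h.mem i s hs)
  isMatching := h.isMatching
  not_claimsSeat i s hs := by
    refine h.not_claimsSeat i s ((idxOf_lt_rank_iff_of_isPrefix (hpre i)).mpr ⟨hs, ?_⟩)
    cases hμi : μ i with
    | none =>
      rw [hnone i hμi]
      rwa [hμi, rank_none] at hs
    | some t =>
      rw [hμi, rank_some] at hs
      exact hs.trans ((idxOf_lt_length_iff_of_isPrefix (hpre i)).mpr (h.mem i t hμi))

lemma StableFor.update_singleton (h : StableFor A prio q μ) {i : I} {s : S}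
    (hi : μ i = some s ∨ μ i = none ∧ s ∈ A i) :
    StableFor (Function.update A i [s]) prio q μ where
  mem j t ht := by
    rcases eq_or_ne j i with rfl | hj
    · rcases hi with hi | ⟨hi, -⟩ <;> simp_all
    · rw [Function.update_of_ne hj]
      exact h.mem j t ht
  isMatching := h.isMatching
  not_claimsSeat j t ht := by
    rcases eq_or_ne j i with rfl | hj
    · rw [Function.update_self] at ht
      rcases hi with hi | ⟨hi, hs⟩
      · simp [hi] at ht
      · obtain rfl : t = s := by simpa using mem_of_idxOf_lt_rank ht
        exact h.not_claimsSeat j t (by simpa [hi] using List.idxOf_lt_length_iff.mpr hs)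
    · exact h.not_claimsSeat j t (by simpa [Function.update_of_ne hj] using ht)

variable [Fintype S]

/-- Student-optimality in both markets gives the two inequalities; rural hospitals keeps the
outcome for `A` within the lists `A'`. -/
theorem DA.outcome_eq_of_isPrefix (hA : ∀ i, (A i).Nodup) (hprio : ∀ s, ValidPrio (prio s))
    (hpre : ∀ i, A' i <+: A i) (h : StableFor A prio q (DA.outcome A' prio q)) :
    DA.outcome A prio q = DA.outcome A' prio q := by
  have hA' : ∀ i, (A' i).Nodup := fun i => (hA i).sublist (hpre i).sublist
  have hle := DA.rank_outcome_le hA hprio h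
  have hμ : StableFor A' prio q (DA.outcome A prio q) := by
    refine (DA.stableFor_outcome hA hprio).of_isPrefix hpre fun i s hs => ?_
    obtain ⟨t, ht⟩ : ∃ t, DA.outcome A' prio q i = some t :=
      Option.ne_none_iff_exists'.mp fun h' => by
        simp [(DA.outcome_eq_none_iff hA hprio h).mpr h'] at hs
    have htA' := (DA.stableFor_outcome hA' hprio).mem i t ht
    have hst := hle i
    rw [Option.mem_def.mp hs, ht, rank_some, rank_some] at hst
    exact (idxOf_lt_length_iff_of_isPrefix (hpre i)).mp
      (hst.trans_lt ((idxOf_lt_length_iff_of_isPrefix (hpre i)).mpr htA'))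
  funext i
  refine eq_of_rank_eq (hμ.mem i) ((DA.stableFor_outcome hA' hprio).mem i) ?_
  refine le_antisymm ?_ (DA.rank_outcome_le hA' hprio hμ i)
  rw [rank_of_isPrefix (hpre i), rank_of_isPrefix (hpre i)]
  exact min_le_min_right _ (hle i)

/-- A weak form of strategy-proofness. Truncate `i`'s list just after `s`: by rural hospitals she
is still matched, hence to a school she ranks at least as high as `s`, and the resulting matching
is stable for `A`. -/
theorem DA.rank_outcome_le_of_stableFor_update (hA : ∀ i, (A i).Nodup)
    (hprio : ∀ s, ValidPrio (prio s)) {i : I} {s : S} (hs : s ∈ A i)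
    (hν : StableFor (Function.update A i [s]) prio q μ) (hμi : μ i = some s) :
    rank (A i) (DA.outcome A prio q i) ≤ (A i).idxOf s := by
  set E := Function.update A i ((A i).take ((A i).idxOf s + 1))
  have hE : ∀ j, E j <+: A j := by
    intro j
    rcases eq_or_ne j i with rfl | hj
    · simpa [E] using List.take_prefix _ _
    · simp [E, Function.update_of_ne hj]
  have hsE : s ∈ E i := by
    rw [← idxOf_lt_length_iff_of_isPrefix (hE i)]
    simp [E, List.idxOf_lt_length_iff.mpr hs]
  have hπ := DA.stableFor_outcome (fun j => (hA j).sublist (hE j).sublist) (q := q) hprio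
  obtain ⟨t, ht⟩ : ∃ t, DA.outcome E prio q i = some t := by
    refine Option.ne_none_iff_exists'.mp fun hπi => ?_
    have hD : ∀ j, (Function.update A i [s] j).Nodup := by
      intro j
      rcases eq_or_ne j i with rfl | hj
      · simp
      · simpa [Function.update_of_ne hj] using hA j
    have hπD := hπ.update_singleton (Or.inr ⟨hπi, hsE⟩)
    rw [Function.update_idem] at hπD
    have := (DA.outcome_eq_none_iff hD hprio hν).mp
      ((DA.outcome_eq_none_iff hD hprio hπD).mpr hπi)
    simp [hμi] at this
  have hπA : StableFor A prio q (DA.outcome E prio q) :=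
    hπ.of_isPrefix_of_eq_none hE fun j hj => by
      have hji : j ≠ i := by rintro rfl; simp [ht] at hj
      simp [E, Function.update_of_ne hji]
  have htE := (idxOf_lt_length_iff_of_isPrefix (hE i)).mpr (hπ.mem i t ht)
  have := DA.rank_outcome_le hA hprio hπA i
  simp only [E, Function.update_self, List.length_take] at htE
  rw [ht, rank_some] at this
  omega

/-- The outcome does not change when `i` reports her full list `A i` instead, and from there the
weak form of strategy-proofness applies. -/
theorem DA.rank_outcome_le_of_update (hA : ∀ i, (A i).Nodup) (hprio : ∀ s, ValidPrio (prio s))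
    (hpre : ∀ i, A' i <+: A i) (h : StableFor A prio q (DA.outcome A' prio q)) {i : I}
    {L : List S} (hL : L.Nodup) {s : S} (hs : s ∈ A i)
    (hν : DA.outcome (Function.update A' i L) prio q i = some s) :
    rank (A i) (DA.outcome A' prio q i) ≤ (A i).idxOf s := by
  set F := Function.update A' i (A i)
  have hA'F (j : I) : A' j <+: F j := by
    rcases eq_or_ne j i with rfl | hj
    · simpa [F] using hpre j
    · simp [F, Function.update_of_ne hj]
  have hFA (j : I) : F j <+: A j := by
    rcases eq_or_ne j i with rfl | hj
    · simp [F]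
    · simpa [F, Function.update_of_ne hj] using hpre j
  have hF (j : I) : (F j).Nodup := (hA j).sublist (hFA j).sublist
  have hA' (j : I) : (A' j).Nodup := (hA j).sublist (hpre j).sublist
  have hL' (j : I) : (Function.update A' i L j).Nodup := by
    rcases eq_or_ne j i with rfl | hj
    · simpa using hL
    · simpa [Function.update_of_ne hj] using hA' j
  have hμF : DA.outcome F prio q = DA.outcome A' prio q :=
    DA.outcome_eq_of_isPrefix hF hprio hA'F <| h.of_isPrefix hFA fun j s hs =>
      (hA'F j).subset ((DA.stableFor_outcome hA' hprio).mem j s hs)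
  have hνF : StableFor (Function.update F i [s]) prio q
      (DA.outcome (Function.update A' i L) prio q) := by
    simpa [F] using (DA.stableFor_outcome hL' hprio).update_singleton (Or.inl hν)
  simpa [hμF, F] using
    DA.rank_outcome_le_of_stableFor_update hF hprio (by simpa [F] using hs) hνF hν

end Truncation

section Preferences

lemma ValidPref.exists_eq_append {p : List (Option S)} (hp : ValidPref p) :
    ∃ rest, p = (acceptables p).map some ++ none :: rest := by
  have htake : p.takeWhile Option.isSome = (acceptables p).map some := by
    rw [acceptables, List.map_filterMap_some_eq_filter_map_isSome, List.map_id]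
    exact (List.filter_eq_self.mpr fun a ha => List.mem_takeWhile_imp ha).symm
  have hnone : none ∈ p.dropWhile Option.isSome := by
    have := hp.2 none
    rw [← List.takeWhile_append_dropWhile (p := Option.isSome) (l := p), List.mem_append] at this
    exact this.resolve_left fun h => by simpa using List.mem_takeWhile_imp h
  have hne := List.ne_nil_of_mem hnone
  have hhead : (p.dropWhile Option.isSome).head hne = none := by
    simpa using List.head_dropWhile_not Option.isSome hne
  refine ⟨(p.dropWhile Option.isSome).tail, ?_⟩
  conv_lhs => rw [← List.takeWhile_append_dropWhile (p := Option.isSome) (l := p),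
    ← List.cons_head_tail hne]
  rw [htake, hhead]

lemma ValidPref.nodup_acceptables {p : List (Option S)} (hp : ValidPref p) :
    (acceptables p).Nodup := by
  obtain ⟨rest, hrest⟩ := hp.exists_eq_append
  have := hp.1
  rw [hrest] at this
  exact (List.nodup_append.mp this).1.of_map some

variable [DecidableEq S]

lemma idxOf_map_some (l : List S) (s : S) : (l.map some).idxOf (some s) = l.idxOf s := by
  induction l with
  | nil => rfl
  | cons a l ih => by_cases h : a = s <;> simp [h, ih]

variable {p : List (Option S)}

lemma ValidPref.idxOf_eq_rank (hp : ValidPref p) {o : Option S}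
    (ho : ∀ s ∈ o, s ∈ acceptables p) : p.idxOf o = rank (acceptables p) o := by
  obtain ⟨rest, hrest⟩ := hp.exists_eq_append
  conv_lhs => rw [hrest]
  cases o with
  | none => simp [List.idxOf_append_of_notMem]
  | some s => simp [List.idxOf_append_of_mem, ho s rfl, idxOf_map_some]

lemma ValidPref.length_lt_idxOf_some (hp : ValidPref p) {s : S} (hs : s ∉ acceptables p) :
    (acceptables p).length < p.idxOf (some s) := by
  obtain ⟨rest, hrest⟩ := hp.exists_eq_append
  conv_rhs => rw [hrest]
  rw [List.idxOf_append_of_notMem (by simpa using hs)]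
  simp

lemma ValidPref.not_prefLt_none_iff (hp : ValidPref p) {o : Option S} :
    ¬ prefLt p none o ↔ ∀ s ∈ o, s ∈ acceptables p := by
  unfold prefLt
  rw [hp.idxOf_eq_rank (o := none) (by simp), rank_none]
  cases o with
  | none => simp [hp.idxOf_eq_rank (o := none) (by simp)]
  | some s =>
    by_cases hs : s ∈ acceptables p
    · simp [hs, hp.idxOf_eq_rank (o := some s) (by simpa), List.idxOf_le_length]
    · simp [hs, hp.length_lt_idxOf_some hs]

lemma ValidPref.prefLt_some_iff (hp : ValidPref p) {s : S} {o : Option S}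
    (ho : ∀ s ∈ o, s ∈ acceptables p) :
    prefLt p (some s) o ↔ (acceptables p).idxOf s < rank (acceptables p) o := by
  unfold prefLt
  rw [hp.idxOf_eq_rank ho]
  by_cases hs : s ∈ acceptables p
  · rw [hp.idxOf_eq_rank (by simpa), rank_some]
  · have := hp.length_lt_idxOf_some hs
    have := rank_le_length (acceptables p) o
    rw [List.idxOf_of_notMem hs]
    omega

variable [Fintype I] [DecidableEq I] {P : I → List (Option S)} {prio : S → List I}
  {q : S → ℕ} {μ : I → Option S}

theorem isStable_iff_stableFor (hP : ∀ i, ValidPref (P i)) (hμ : IsMatching q μ) :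
    IsStable P prio q μ ↔ StableFor (fun i => acceptables (P i)) prio q μ := by
  have hIR : IndividuallyRational P μ ↔ ∀ i, ∀ s ∈ μ i, s ∈ acceptables (P i) :=
    forall_congr' fun i => (hP i).not_prefLt_none_iff
  refine ⟨fun ⟨hir, hblock⟩ => ⟨hIR.mp hir, hμ, fun i s hs hclaim => ?_⟩,
    fun h => ⟨hIR.mpr h.mem, fun i ⟨s, hs, hclaim⟩ => ?_⟩⟩
  · exact hblock i ⟨s, ((hP i).prefLt_some_iff (hIR.mp hir i)).mpr hs, hclaim⟩
  · exact h.not_claimsSeat i s (((hP i).prefLt_some_iff (h.mem i)).mp hs) hclaim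

end Preferences

lemma acceptables_truncate [DecidableEq S] (p : List (Option S)) (k : ℕ) :
    acceptables (truncate p k) = (acceptables p).take k := by
  rw [truncate, acceptables, List.takeWhile_append_of_pos fun a ha => by
      obtain ⟨b, -, rfl⟩ := List.mem_map.mp ha; rfl,
    List.takeWhile_cons_of_neg (by simp), List.append_nil, List.filterMap_map]
  exact List.filterMap_some

lemma GSk_eq_outcome [Fintype I] [DecidableEq I] [Fintype S] [DecidableEq S] (k : ℕ)
    (P : I → List (Option S)) (prio : S → List I) (q : S → ℕ) :
    GSk k P prio q = DA.outcome (fun i => (acceptables (P i)).take k) prio q := by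
  simp only [GSk, ← acceptables_truncate]
  rfl

section Boston

variable [Fintype I] [DecidableEq I] [DecidableEq S] {P : I → List (Option S)}
  {prio : S → List I} {q : S → ℕ}

variable (P prio q) in
/-- `Boston P prio q` is `bostonState P prio q (Fintype.card S)` by definition. -/
def bostonState (t : ℕ) : I → Option S :=
  (List.range t).foldl (bostonRound P prio q) (fun _ => none)

variable (P prio) in
def bostonApplicants (μ : I → Option S) (t : ℕ) (s : S) : List I :=
  (prio s).filter (fun j => decide (μ j = none ∧ (acceptables (P j))[t]? = some s))

lemma bostonState_succ (t : ℕ) :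
    bostonState P prio q (t + 1) = bostonRound P prio q (bostonState P prio q t) t := by
  rw [bostonState, List.range_succ, List.foldl_append]
  rfl

lemma bostonRound_eq_some_iff {μ : I → Option S} {t : ℕ} {s : S} {j : I} :
    bostonRound P prio q μ t j = some s ↔ μ j = some s ∨
      j ∈ (bostonApplicants P prio μ t s).take
        (q s - (Finset.univ.filter (fun j' => μ j' = some s)).card) := by
  have happ : ∀ {u : S}, j ∈ bostonApplicants P prio μ t u →
      μ j = none ∧ (acceptables (P j))[t]? = some u := fun h => by
    simpa [bostonApplicants] using (List.mem_filter.mp h).2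
  unfold bostonRound
  cases hμj : μ j with
  | some u =>
    simp only [Option.some.injEq, iff_self_or]
    exact fun h => by simpa [hμj] using (happ (List.mem_of_mem_take h)).1
  | none =>
    cases htj : (acceptables (P j))[t]? with
    | none => simpa [htj] using fun h => happ (List.mem_of_mem_take h)
    | some u =>
      by_cases hu : u = s
      · subst hu; simp [bostonApplicants]
      · simp only [reduceCtorEq, false_or]
        refine ⟨fun h => ?_, fun h => ?_⟩
        · split_ifs at h
          exact absurd (Option.some_injective _ h) hu
        simp [(happ (List.mem_of_mem_take h)).2] at htj
        exact absurd htj.symm hu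

lemma bostonState_mono {t t' : ℕ} {j : I} {s : S} (h : bostonState P prio q t j = some s)
    (htt' : t ≤ t') : bostonState P prio q t' j = some s := by
  induction t', htt' using Nat.le_induction with
  | base => exact h
  | succ t' _ ih => rw [bostonState_succ, bostonRound_eq_some_iff]; exact Or.inl ih

lemma mem_and_idxOf_lt_of_bostonState_eq_some (hB : ∀ i, (acceptables (P i)).Nodup) {t : ℕ}
    {j : I} {s : S} (h : bostonState P prio q t j = some s) :
    s ∈ acceptables (P j) ∧ (acceptables (P j)).idxOf s < t := by
  induction t with
  | zero => simp [bostonState] at h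
  | succ t ih =>
    rw [bostonState_succ, bostonRound_eq_some_iff] at h
    rcases h with h | h
    · exact (ih h).imp_right (Nat.lt_succ_of_lt)
    · have := (List.mem_filter.mp (List.mem_of_mem_take h)).2
      simp only [decide_eq_true_eq] at this
      obtain ⟨hlt, rfl⟩ := List.getElem?_eq_some_iff.mp this.2
      exact ⟨List.getElem_mem _, by rw [(hB j).idxOf_getElem]; omega⟩

lemma card_fiber_bostonState_succ (hprio : ∀ s, ValidPrio (prio s)) (t : ℕ) (s : S) :
    (Finset.univ.filter (fun j => bostonState P prio q (t + 1) j = some s)).card =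
      (Finset.univ.filter (fun j => bostonState P prio q t j = some s)).card +
      ((bostonApplicants P prio (bostonState P prio q t) t s).take (q s -
        (Finset.univ.filter (fun j => bostonState P prio q t j = some s)).card)).length := by
  set μ := bostonState P prio q t
  set T := (bostonApplicants P prio μ t s).take
    (q s - (Finset.univ.filter (fun j => μ j = some s)).card)
  have hT : T.Nodup := ((hprio s).1.filter _).sublist (List.take_sublist _ _)
  have hdisj : Disjoint (Finset.univ.filter (fun j => μ j = some s)) T.toFinset := by
    refine Finset.disjoint_left.mpr fun j hj hjT => ?_
    have := (List.mem_filter.mp (List.mem_of_mem_take (List.mem_toFinset.mp hjT))).2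
    simp_all
  rw [← List.toFinset_card_of_nodup hT, ← Finset.card_union_of_disjoint hdisj]
  congr 1
  ext j
  simp [T, μ, bostonState_succ, bostonRound_eq_some_iff]

lemma card_fiber_bostonState_le (hprio : ∀ s, ValidPrio (prio s)) (t : ℕ) (s : S) :
    (Finset.univ.filter (fun j => bostonState P prio q t j = some s)).card ≤ q s := by
  induction t with
  | zero => simp [bostonState]
  | succ t ih =>
    rw [card_fiber_bostonState_succ hprio, List.length_take]
    omega

lemma card_fiber_bostonState_succ_of_rejected (hprio : ∀ s, ValidPrio (prio s)) {t : ℕ} {i : I}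
    {s : S} (hi : bostonState P prio q t i = none) (hs : (acceptables (P i))[t]? = some s)
    (hrej : bostonState P prio q (t + 1) i ≠ some s) :
    (Finset.univ.filter (fun j => bostonState P prio q (t + 1) j = some s)).card = q s := by
  have happ : i ∈ bostonApplicants P prio (bostonState P prio q t) t s := by
    simp [bostonApplicants, (hprio s).2 i, hi, hs]
  have hlong : q s - (Finset.univ.filter (fun j => bostonState P prio q t j = some s)).card <
      (bostonApplicants P prio (bostonState P prio q t) t s).length := by
    by_contra! hle
    rw [← List.take_of_length_le hle] at happ
    exact hrej (by rw [bostonState_succ, bostonRound_eq_some_iff]; exact Or.inr happ)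
  have := card_fiber_bostonState_le (P := P) (q := q) hprio t s
  rw [card_fiber_bostonState_succ hprio, List.length_take]
  omega

variable [Fintype S]

/-- `s` was filled in the round in which it rejected `i`. -/
lemma boston_full_of_idxOf_lt_rank (hB : ∀ i, (acceptables (P i)).Nodup)
    (hprio : ∀ s, ValidPrio (prio s)) {i : I} {s : S} (hs : s ∈ acceptables (P i))
    (h : (acceptables (P i)).idxOf s < rank (acceptables (P i)) (Boston P prio q i)) :
    (Finset.univ.filter (fun j => Boston P prio q j = some s)).card = q s ∧
      ∀ j, Boston P prio q j = some s →
        (acceptables (P j)).idxOf s ≤ (acceptables (P i)).idxOf s := by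
  set r := (acceptables (P i)).idxOf s
  have hrS : r + 1 ≤ Fintype.card S :=
    (List.idxOf_lt_length_iff.mpr hs).trans_le (hB i).length_le_card
  have hBoston : ∀ {t j u}, t ≤ Fintype.card S → bostonState P prio q t j = some u →
      Boston P prio q j = some u := fun ht hj => bostonState_mono hj ht
  have hi : bostonState P prio q r i = none := by
    refine Option.eq_none_iff_forall_ne_some.mpr fun u hu => ?_
    have := (mem_and_idxOf_lt_of_bostonState_eq_some hB hu).2
    rw [hBoston (by omega) hu, rank_some] at h
    omega
  have hrej : bostonState P prio q (r + 1) i ≠ some s := fun hi' => by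
    rw [hBoston hrS hi', rank_some] at h
    exact lt_irrefl _ h
  have hfull := card_fiber_bostonState_succ_of_rejected hprio hi (List.getElem?_idxOf hs) hrej
  have hsub : Finset.univ.filter (fun j => bostonState P prio q (r + 1) j = some s) ⊆
      Finset.univ.filter (fun j => Boston P prio q j = some s) := fun j hj => by
    simpa using hBoston hrS (Finset.mem_filter.mp hj).2
  have heq := Finset.eq_of_subset_of_card_le hsub
    (hfull ▸ card_fiber_bostonState_le hprio (Fintype.card S) s)
  refine ⟨heq ▸ hfull, fun j hj => ?_⟩
  have hj' : j ∈ Finset.univ.filter (fun j => Boston P prio q j = some s) := by simpa using hj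
  rw [← heq, Finset.mem_filter] at hj'
  exact Nat.lt_succ_iff.mp (mem_and_idxOf_lt_of_bostonState_eq_some hB hj'.2).2

/-- Among the students who do better under deferred acceptance, take `i` whose school `s` there
has least rank. In Boston, `s` rejected `i` in favour of a higher-priority student `j` who ranked
`s` no lower; stability of deferred acceptance makes `j` do even better there, contradicting the
choice of `i`. -/
lemma rank_boston_le_of_outcome_eq_some (hB : ∀ i, (acceptables (P i)).Nodup)
    (hprio : ∀ s, ValidPrio (prio s))
    (hσ : StableFor (fun i => acceptables (P i)) prio q (Boston P prio q)) {i : I} {s : S}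
    (hμi : DA.outcome (fun i => acceptables (P i)) prio q i = some s) :
    rank (acceptables (P i)) (Boston P prio q i) ≤ (acceptables (P i)).idxOf s := by
  have hμ := DA.stableFor_outcome (q := q) hB hprio
  suffices ∀ n i s, (acceptables (P i)).idxOf s = n →
      DA.outcome (fun i => acceptables (P i)) prio q i = some s →
      rank (acceptables (P i)) (Boston P prio q i) ≤ (acceptables (P i)).idxOf s from
    this _ i s rfl hμi
  intro n
  induction n using Nat.strong_induction_on with
  | _ n ih =>
  rintro i s rfl hμi
  refine not_lt.mp fun hlt => ?_
  obtain ⟨hfull, hearly⟩ := boston_full_of_idxOf_lt_rank hB hprio (hμ.mem i s hμi) hlt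
  have hσi : Boston P prio q i ≠ some s := fun h => by
    rw [h, rank_some] at hlt
    exact lt_irrefl _ hlt
  obtain ⟨j, hjσ, hjμ⟩ : ∃ j, Boston P prio q j = some s ∧
      DA.outcome (fun i => acceptables (P i)) prio q j ≠ some s := by
    by_contra! hall
    have hsub : Finset.univ.filter (fun j => Boston P prio q j = some s) ⊆
        Finset.univ.filter (fun j => DA.outcome (fun i => acceptables (P i)) prio q j = some s) :=
      fun j hj => by simpa using hall j (Finset.mem_filter.mp hj).2
    have heq := Finset.eq_of_subset_of_card_le hsub (hfull ▸ hμ.isMatching s)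
    have hi : i ∈ Finset.univ.filter
        (fun j => DA.outcome (fun i => acceptables (P i)) prio q j = some s) := by simpa using hμi
    rw [← heq] at hi
    exact hσi (Finset.mem_filter.mp hi).2
  have hji : prioLt (prio s) j i := (hprio s).prioLt_of_not_prioLt
    (by rintro rfl; exact hσi hjσ)
    fun hij => hσ.not_claimsSeat i s hlt (Or.inr ⟨j, hjσ, hij⟩)
  have hjrank : rank (acceptables (P j)) (DA.outcome (fun i => acceptables (P i)) prio q j) <
      (acceptables (P j)).idxOf s := by
    refine lt_of_not_ge fun hge => ?_
    rcases hge.lt_or_eq with hlt' | heq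
    · exact hμ.not_claimsSeat j s hlt' (Or.inr ⟨i, hμi, hji⟩)
    · exact hjμ (eq_of_rank_eq (hμ.mem j) (by simpa using hσ.mem j s hjσ) heq.symm)
  obtain ⟨u, hu⟩ : ∃ u, DA.outcome (fun i => acceptables (P i)) prio q j = some u :=
    Option.ne_none_iff_exists'.mp fun h => by
      rw [h, rank_none] at hjrank
      exact absurd hjrank List.idxOf_le_length.not_gt
  rw [hu, rank_some] at hjrank
  refine (ih _ (hjrank.trans_le (hearly j hjσ)) j u rfl hu).not_gt ?_
  rw [hjσ, rank_some]
  exact hjrank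

theorem outcome_eq_boston (hB : ∀ i, (acceptables (P i)).Nodup)
    (hprio : ∀ s, ValidPrio (prio s))
    (hσ : StableFor (fun i => acceptables (P i)) prio q (Boston P prio q)) :
    DA.outcome (fun i => acceptables (P i)) prio q = Boston P prio q := by
  have hμ := DA.stableFor_outcome (q := q) hB hprio
  funext i
  refine eq_of_rank_eq (hμ.mem i) (hσ.mem i) (le_antisymm (DA.rank_outcome_le hB hprio hσ i) ?_)
  cases hμi : DA.outcome (fun i => acceptables (P i)) prio q i with
  | none => exact rank_le_length _ _
  | some s => exact rank_boston_le_of_outcome_eq_some hB hprio hσ hμi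

end Boston

section Corollary

variable [Fintype I] [DecidableEq I] [Fintype S] [DecidableEq S] {P : I → List (Option S)}
  {prio : S → List I} {q : S → ℕ}

theorem GSk_eq_Bostonk_of_isStable (hP : ∀ i, ValidPref (P i)) (hprio : ∀ s, ValidPrio (prio s))
    {k : ℕ} (h : IsStable P prio q (Bostonk k P prio q)) :
    GSk k P prio q = Bostonk k P prio q := by
  have hacc (i : I) := acceptables_truncate (P i) k
  have hB (i : I) : (acceptables (truncate (P i) k)).Nodup :=
    hacc i ▸ (hP i).nodup_acceptables.sublist (List.take_sublist _ _)
  have hσ := (isStable_iff_stableFor hP fun s => card_fiber_bostonState_le hprio _ s).mp h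
  exact outcome_eq_boston hB hprio <| hσ.of_isPrefix (fun i => hacc i ▸ List.take_prefix _ _)
    fun i s hs => (mem_and_idxOf_lt_of_bostonState_eq_some hB hs).1

theorem GSk_eq_of_isStable (hP : ∀ i, ValidPref (P i)) (hprio : ∀ s, ValidPrio (prio s))
    {k l : ℕ} (hlk : l ≤ k) (h : IsStable P prio q (GSk l P prio q)) :
    GSk k P prio q = GSk l P prio q := by
  have hA (n : ℕ) (i : I) : ((acceptables (P i)).take n).Nodup :=
    (hP i).nodup_acceptables.sublist (List.take_sublist _ _)
  simp only [GSk_eq_outcome] at h ⊢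
  have hμ := (isStable_iff_stableFor hP (DA.isMatching_outcome (hA l) hprio)).mp h
  refine DA.outcome_eq_of_isPrefix (hA k) hprio (fun i => List.take_prefix_take_left hlk) ?_
  exact hμ.of_isPrefix (fun i => List.take_prefix _ _) fun i s hs =>
    (List.take_prefix_take_left hlk).subset ((DA.stableFor_outcome (hA l) hprio).mem i s hs)

theorem notManipulable_GSk_of_isStable (hP : ∀ i, ValidPref (P i))
    (hprio : ∀ s, ValidPrio (prio s)) {k : ℕ} (h : IsStable P prio q (GSk k P prio q)) :
    NotManipulable (fun R => GSk k R prio q) P := by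
  rintro i ⟨Q, hQ, hman⟩
  have hA (j : I) : (acceptables (P j)).Nodup := (hP j).nodup_acceptables
  have hpre (j : I) : (acceptables (P j)).take k <+: acceptables (P j) := List.take_prefix _ _
  rw [GSk_eq_outcome] at h
  have hμ := (isStable_iff_stableFor hP
    (DA.isMatching_outcome (fun j => (hA j).sublist (hpre j).sublist) hprio)).mp h
  have hupdate : GSk k (Function.update P i Q) prio q =
      DA.outcome (Function.update (fun j => (acceptables (P j)).take k) i
        ((acceptables Q).take k)) prio q := by
    rw [GSk_eq_outcome]
    congr 1
    funext j
    exact Function.apply_update (fun _ p => (acceptables p).take k) P i Q j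
  simp only [hupdate, GSk_eq_outcome] at hman
  obtain ⟨s, hs⟩ := Option.ne_none_iff_exists'.mp fun hnone =>
    (hP i).not_prefLt_none_iff.mpr (hμ.mem i) (hnone ▸ hman)
  rw [hs, (hP i).prefLt_some_iff (hμ.mem i)] at hman
  have := DA.rank_outcome_le_of_update hA hprio hpre hμ
    (hQ.nodup_acceptables.sublist (List.take_sublist _ _)) (mem_of_idxOf_lt_rank hman) hs
  omega

end Corollary

theorem stable_implies_gsk_stable_and_not_manipulable_general
    {I S : Type*} [Fintype I] [DecidableEq I] [Fintype S] [DecidableEq S]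
    (P : I → List (Option S)) (prio : S → List I) (q : S → ℕ)
    (hP : ∀ i, ValidPref (P i)) (hprio : ∀ s, ValidPrio (prio s)) :
    (∀ k : ℕ, 1 < k → IsStable P prio q (Bostonk k P prio q) →
        IsStable P prio q (GSk k P prio q) ∧
        NotManipulable (fun R => GSk k R prio q) P) ∧
    (∀ k l : ℕ, 1 < l → l < k → IsStable P prio q (GSk l P prio q) →
        IsStable P prio q (GSk k P prio q) ∧
        NotManipulable (fun R => GSk k R prio q) P) := by
  have hGSk (k : ℕ) (h : IsStable P prio q (GSk k P prio q)) :
      IsStable P prio q (GSk k P prio q) ∧ NotManipulable (fun R => GSk k R prio q) P :=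
    ⟨h, notManipulable_GSk_of_isStable hP hprio h⟩
  refine ⟨fun k _ h => hGSk k ?_, fun k l _ hlk h => hGSk k ?_⟩
  · rwa [GSk_eq_Bostonk_of_isStable hP hprio h]
  · rwa [GSk_eq_of_isStable hP hprio hlk.le h]

/-- Corollary 3: (i) for `k > 1`, if `β^k(P,≻,q)` is stable then
`GS^k(P,≻,q)` is stable and `GS^k` is not manipulable at `(P,≻,q)`; (ii) for
`k > ℓ > 1`, if `GS^ℓ(P,≻,q)` is stable then `GS^k(P,≻,q)` is stable and `GS^k` is not
manipulable at `(P,≻,q)`. -/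
theorem stable_implies_gsk_stable_and_not_manipulable
    {I S : Type*} [Fintype I] [DecidableEq I] [Fintype S] [DecidableEq S]
    (hIS : Fintype.card S < Fintype.card I)
    (P : I → List (Option S)) (prio : S → List I) (q : S → ℕ)
    (hP : ∀ i, ValidPref (P i)) (hprio : ∀ s, ValidPrio (prio s)) :
    (∀ k : ℕ, 1 < k → IsStable P prio q (Bostonk k P prio q) →
        IsStable P prio q (GSk k P prio q) ∧
        NotManipulable (fun R => GSk k R prio q) P) ∧
    (∀ k l : ℕ, 1 < l → l < k → IsStable P prio q (GSk l P prio q) →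
        IsStable P prio q (GSk k P prio q) ∧
        NotManipulable (fun R => GSk k R prio q) P) :=
  stable_implies_gsk_stable_and_not_manipulable_general P prio q hP hprio

end SchoolChoice
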